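/- Let T > 0, A > 0, C > 0 and B ≥ (CT)² + 1. Suppose nonnegative reals a_0, …, a_{k-1} satisfy a_j ≤ B^{j+1} j! for 0 ≤ j ≤ k-1. Then ∑_{j=0}^{k-1} (CT)^{k-j} binom(k,j) a_j ≤ (3 + CT) B^k k!. -/

import Mathlib

/-!
Write `x = C T`. Since `C(k, j) j! = k! / (k - j)!`, the `j`-th term is at most
`k! x^(k-j) B^(j+1) / (k-j)!`. The top term `j = k - 1` contributes `x B^k k!`; for every other
term `x^(k-j) ≤ B^(k-j-1)`, because `x² ≤ B` and `x ≤ B`, so these contribute at most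
`B^k k! ∑ 1/i! ≤ e B^k k! < 3 B^k k!`.
-/

open Finset Nat

lemma pow_add_two_le_pow_succ {x B : ℝ} (hx : 0 ≤ x) (hB : x ^ 2 + 1 ≤ B) (n : ℕ) :
    x ^ (n + 2) ≤ B ^ (n + 1) := by
  have hxB : x ≤ B := by nlinarith [sq_nonneg (x - 1)]
  calc x ^ (n + 2) = x ^ 2 * x ^ n := by ring
    _ ≤ B * B ^ n := by gcongr <;> linarith
    _ = B ^ (n + 1) := by ring

lemma pow_mul_choose_mul_le {x B a : ℝ} (hx : 0 ≤ x) {j k : ℕ} (hjk : j ≤ k)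
    (ha : a ≤ B ^ (j + 1) * j !) :
    x ^ (k - j) * k.choose j * a ≤ k ! * (x ^ (k - j) * B ^ (j + 1) / (k - j)!) := by
  rw [Nat.cast_choose ℝ hjk]
  calc x ^ (k - j) * (k ! / (j ! * (k - j)!)) * a
      ≤ x ^ (k - j) * (k ! / (j ! * (k - j)!)) * (B ^ (j + 1) * j !) := by gcongr
    _ = k ! * (x ^ (k - j) * B ^ (j + 1) / (k - j)!) := by
      field_simp

lemma sum_range_pow_mul_pow_div_factorial_le {x B : ℝ} (hx : 0 ≤ x) (hB : x ^ 2 + 1 ≤ B)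
    (k : ℕ) : ∑ j ∈ range k, x ^ (k - j) * B ^ (j + 1) / (k - j)! ≤ (3 + x) * B ^ k := by
  have hB0 : 0 ≤ B := by nlinarith [sq_nonneg x]
  cases k with
  | zero => simp; linarith
  | succ n =>
    have hterm : ∀ j ∈ range n,
        x ^ (n + 1 - j) * B ^ (j + 1) / (n + 1 - j)! ≤ B ^ (n + 1) * (1 / (n - 1 - j)!) := by
      intro j hj
      obtain ⟨m, rfl⟩ : ∃ m, n = j + m + 1 := ⟨n - j - 1, by grind⟩
      rw [show j + m + 1 + 1 - j = m + 2 by omega, show j + m + 1 - 1 - j = m by omega]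
      calc x ^ (m + 2) * B ^ (j + 1) / (m + 2)!
          ≤ B ^ (m + 1) * B ^ (j + 1) / (m + 2)! := by
            gcongr
            exact pow_add_two_le_pow_succ hx hB m
        _ ≤ B ^ (m + 1) * B ^ (j + 1) / m ! := by
            gcongr
            omega
        _ = B ^ (j + m + 1 + 1) * (1 / m !) := by ring
    have hexp : ∑ i ∈ range n, 1 / (i ! : ℝ) ≤ 3 := by
      simpa using (Real.sum_le_exp_of_nonneg zero_le_one n).trans Real.exp_one_lt_three.le
    rw [sum_range_succ, show n + 1 - n = 1 by omega]
    calc ∑ j ∈ range n, x ^ (n + 1 - j) * B ^ (j + 1) / (n + 1 - j)! + x ^ 1 * B ^ (n + 1) / 1 !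
        ≤ ∑ j ∈ range n, B ^ (n + 1) * (1 / (n - 1 - j)!) + x * B ^ (n + 1) := by
          gcongr with j hj
          · exact hterm j hj
          · simp
      _ = B ^ (n + 1) * ∑ i ∈ range n, 1 / (i ! : ℝ) + x * B ^ (n + 1) := by
          rw [← mul_sum, sum_range_reflect (fun i => 1 / (i ! : ℝ)) n]
      _ ≤ B ^ (n + 1) * 3 + x * B ^ (n + 1) := by gcongr
      _ = (3 + x) * B ^ (n + 1) := by ring

theorem gevrey_induction_sum_bound_general (T C B : ℝ) (hT : 0 < T)
    (hC : 0 < C) (hB : (C*T)^2 + 1 ≤ B) (k : ℕ) (a : ℕ → ℝ)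
    (hbound : ∀ j ≤ k - 1, a j ≤ B^(j+1) * Nat.factorial j) :
    ∑ j ∈ Finset.range k, (C*T)^(k-j) * (Nat.choose k j) * a j
      ≤ (3 + C*T) * B^k * Nat.factorial k := by
  have hx : 0 ≤ C * T := (mul_pos hC hT).le
  calc ∑ j ∈ range k, (C * T) ^ (k - j) * (k.choose j) * a j
      ≤ ∑ j ∈ range k, k ! * ((C * T) ^ (k - j) * B ^ (j + 1) / (k - j)!) :=
        sum_le_sum fun j hj =>
          pow_mul_choose_mul_le hx (mem_range.1 hj).le (hbound j (by grind))
    _ = k ! * ∑ j ∈ range k, (C * T) ^ (k - j) * B ^ (j + 1) / (k - j)! := by rw [mul_sum]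
    _ ≤ k ! * ((3 + C * T) * B ^ k) := by
        gcongr
        exact sum_range_pow_mul_pow_div_factorial_le hx hB k
    _ = (3 + C * T) * B ^ k * k ! := by ring

/-- elementary combinatorial estimate closing the Gevrey induction. -/
theorem gevrey_induction_sum_bound (T A C B : ℝ) (hT : 0 < T) (hA : 0 < A)
    (hC : 0 < C) (hB : (C*T)^2 + 1 ≤ B) (k : ℕ) (a : ℕ → ℝ)
    (ha : ∀ j, 0 ≤ a j)
    (hbound : ∀ j ≤ k - 1, a j ≤ B^(j+1) * Nat.factorial j) :
    ∑ j ∈ Finset.range k, (C*T)^(k-j) * (Nat.choose k j) * a j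
      ≤ (3 + C*T) * B^k * Nat.factorial k :=
  gevrey_induction_sum_bound_general T C B hT hC hB k a hbound
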